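/- arXiv:2005.04422 — 2 statements merged into one kernel-verified Lean document; each statement's English description precedes it below -/
import Mathlib

section
/- Every complex polynomial p of degree ≤ M in the three real variables x, y, z can be written as p = h + q·(x²+y²+z²−1), where h is a finite linear combination of homogeneous harmonic polynomials of degrees ≤ M and q is a polynomial of degree ≤ M−2. -/
open scoped ComplexConjugate
open MeasureTheory Filter Topology

noncomputable section

/-! ## Setting

`M₂(ℂ)^{⊗N}` is realized as matrices indexed by `Fin N → Fin 2`, acting on
`(ℂ²)^{⊗N} = EuclideanSpace ℂ (Fin N → Fin 2)`. -/

/-- `M₂(ℂ)^{⊗N}`, realized as matrices indexed by `Fin N → Fin 2`. -/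
abbrev TP (N : ℕ) : Type := Matrix (Fin N → Fin 2) (Fin N → Fin 2) ℂ

/-- The Pauli matrices `σ₁, σ₂, σ₃`. -/
def pauli : Fin 3 → Matrix (Fin 2) (Fin 2) ℂ
  | 0 => !![0, 1; 1, 0]
  | 1 => !![0, -Complex.I; Complex.I, 0]
  | 2 => !![1, 0; 0, -1]

/-- The symmetrization operator `S_N` on `M₂(ℂ)^{⊗N}`: the average over all permutations
of the tensor factors. -/
def symmMat (N : ℕ) (A : TP N) : TP N :=
  (N.factorial : ℂ)⁻¹ • ∑ σ : Equiv.Perm (Fin N), Matrix.of fun i j => A (i ∘ σ) (j ∘ σ)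

/-- `b ⊗ I₂^{⊗(N−M)}` (junk value `0` if `M > N`). -/
def embedMat (M N : ℕ) (b : TP M) : TP N :=
  if h : M ≤ N then
    Matrix.of fun i j =>
      b (fun k => i (Fin.castLE h k)) (fun k => j (Fin.castLE h k)) *
        ∏ k ∈ Finset.univ.filter (fun k : Fin N => M ≤ (k : ℕ)),
          (if i k = j k then (1 : ℂ) else 0)
  else 0

/-- `S_{M,N}(b) = S_N(b ⊗ I₂^{⊗(N−M)})`. -/
def SMN (M N : ℕ) (b : TP M) : TP N := symmMat N (embedMat M N b)

/-- The elementary tensor `σ_{m 0} ⊗ ⋯ ⊗ σ_{m (L-1)}` as a matrix on `(ℂ²)^{⊗L}`. -/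
def pauliTensor {L : ℕ} (m : Fin L → Fin 3) : TP L :=
  Matrix.of fun i j => ∏ k, pauli (m k) (i k) (j k)

/-- For a monomial with exponents `d`, the list of its variable indices (first `d 0` copies
of `0`, then `d 1` copies of `1`, then `d 2` copies of `2`). -/
def monFun (d : Fin 3 →₀ ℕ) : Fin (d 0 + d 1 + d 2) → Fin 3 := fun k =>
  if (k : ℕ) < d 0 then 0 else if (k : ℕ) < d 0 + d 1 then 1 else 2

/-- Quantization of the monomial `x^{d 0} y^{d 1} z^{d 2}`:
`S_{L,N}(σ_{j₁} ⊗ ⋯ ⊗ σ_{j_L})` if `L ≤ N`, and `0` if `L > N`. -/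
def Qmon (N : ℕ) (d : Fin 3 →₀ ℕ) : TP N :=
  SMN (d 0 + d 1 + d 2) N (pauliTensor (monFun d))

/-- The quantization map `Q_{1/N}`: the linear extension of `Qmon` to all complex
polynomials in the three real variables `x, y, z`. -/
def Q (N : ℕ) (p : MvPolynomial (Fin 3) ℂ) : TP N :=
  ∑ d ∈ p.support, p.coeff d • Qmon N d

/-- The symmetric subspace `Sym^N(ℂ²) ⊆ (ℂ²)^{⊗N}` (the fixed points of the permutation
action, i.e. the range of the vector symmetrizer). -/
def SymSub (N : ℕ) : Submodule ℂ (EuclideanSpace ℂ (Fin N → Fin 2)) where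
  carrier := {v | ∀ σ : Equiv.Perm (Fin N), ∀ i, v (i ∘ σ) = v i}
  add_mem' := by
    intro a b ha hb σ i
    have : (a + b) (i ∘ σ) = a (i ∘ σ) + b (i ∘ σ) := rfl
    rw [this, ha σ i, hb σ i]; rfl
  zero_mem' := by intro σ i; rfl
  smul_mem' := by
    intro c v hv σ i
    have : (c • v) (i ∘ σ) = c • (v (i ∘ σ)) := rfl
    rw [this, hv σ i]; rfl

/-- The vector symmetrizer. -/
def symVec (N : ℕ) (v : EuclideanSpace ℂ (Fin N → Fin 2)) :
    EuclideanSpace ℂ (Fin N → Fin 2) :=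
  WithLp.toLp 2 (fun i => (N.factorial : ℂ)⁻¹ * ∑ σ : Equiv.Perm (Fin N), v (i ∘ σ))

lemma symVec_mem (N : ℕ) (v : EuclideanSpace ℂ (Fin N → Fin 2)) :
    symVec N v ∈ SymSub N := by
  intro τ i
  show (N.factorial : ℂ)⁻¹ * ∑ σ : Equiv.Perm (Fin N), v ((i ∘ τ) ∘ σ)
      = (N.factorial : ℂ)⁻¹ * ∑ σ : Equiv.Perm (Fin N), v (i ∘ σ)
  congr 1
  exact Fintype.sum_equiv (Equiv.mulLeft τ) _ _ (fun σ => by rfl)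

/-- The vector symmetrizer as a linear map onto the symmetric subspace. -/
def symProj (N : ℕ) : EuclideanSpace ℂ (Fin N → Fin 2) →ₗ[ℂ] SymSub N where
  toFun v := ⟨symVec N v, symVec_mem N v⟩
  map_add' v w := by
    apply Subtype.ext
    refine PiLp.ext fun i => ?_
    show (N.factorial : ℂ)⁻¹ * ∑ σ : Equiv.Perm (Fin N), (v + w) (i ∘ σ) = _
    have h : ∀ σ : Equiv.Perm (Fin N), (v + w) (i ∘ σ) = v (i ∘ σ) + w (i ∘ σ) :=
      fun _ => rfl
    simp only [h, Finset.sum_add_distrib]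
    show _ = (N.factorial : ℂ)⁻¹ * (∑ σ : Equiv.Perm (Fin N), v (i ∘ σ))
        + (N.factorial : ℂ)⁻¹ * (∑ σ : Equiv.Perm (Fin N), w (i ∘ σ))
    ring
  map_smul' c v := by
    apply Subtype.ext
    refine PiLp.ext fun i => ?_
    show (N.factorial : ℂ)⁻¹ * ∑ σ : Equiv.Perm (Fin N), (c • v) (i ∘ σ) = _
    have h : ∀ σ : Equiv.Perm (Fin N), (c • v) (i ∘ σ) = c * v (i ∘ σ) := fun _ => rfl
    simp only [h, ← Finset.mul_sum]
    show _ = c * ((N.factorial : ℂ)⁻¹ * (∑ σ : Equiv.Perm (Fin N), v (i ∘ σ)))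
    ring

/-- The restriction (compression) of a matrix `A` on `(ℂ²)^{⊗N}` to the symmetric subspace
`Sym^N(ℂ²)`, as a continuous linear operator; when `A` leaves `Sym^N(ℂ²)` invariant (as do
all operators considered here) this is exactly the restriction `A|_{Sym^N(ℂ²)}`. -/
def restrSym (N : ℕ) (A : TP N) : SymSub N →L[ℂ] SymSub N :=
  LinearMap.toContinuousLinearMap
    ((symProj N) ∘ₗ (Matrix.toEuclideanLin A) ∘ₗ (SymSub N).subtype)

/-- The unit sphere `S² ⊂ ℝ³`. -/
abbrev S2 : Type := Metric.sphere (0 : EuclideanSpace ℝ (Fin 3)) 1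

/-- Spherical coordinates `(θ, φ) ↦ (sin θ cos φ, sin θ sin φ, cos θ)`. -/
def sphCoord (a : ℝ × ℝ) : EuclideanSpace ℝ (Fin 3) :=
  WithLp.toLp 2 ![Real.sin a.1 * Real.cos a.2, Real.sin a.1 * Real.sin a.2, Real.cos a.1]

lemma sphCoord_mem (a : ℝ × ℝ) :
    sphCoord a ∈ Metric.sphere (0 : EuclideanSpace ℝ (Fin 3)) 1 := by
  have h : ‖sphCoord a‖ = 1 := by
    rw [EuclideanSpace.norm_eq]
    have : ∑ i : Fin 3, sphCoord a i ^ 2 = 1 := by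
      have hs := Real.sin_sq_add_cos_sq a.1
      have hc := Real.sin_sq_add_cos_sq a.2
      simp [sphCoord, Fin.sum_univ_three]
      nlinarith [hs, hc]
    have h2 : ∀ i : Fin 3, ‖sphCoord a i‖ ^ 2 = sphCoord a i ^ 2 := fun i => sq_abs _
    simp only [h2, this]
    exact Real.sqrt_one
  simpa [mem_sphere_iff_norm] using h

/-- The standard surface measure `dΩ` on `S²` (of total mass `4π`), realized as the
push-forward of `sin θ dθ dφ` on `[0,π] × (−π,π]` under spherical coordinates. -/
def μS2 : Measure S2 :=
  Measure.map (fun a : ℝ × ℝ => (⟨sphCoord a, sphCoord_mem a⟩ : S2))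
    (((volume : Measure (ℝ × ℝ)).restrict
        (Set.Icc (0 : ℝ) Real.pi ×ˢ Set.Ioc (-Real.pi) Real.pi)).withDensity
      fun a => ENNReal.ofReal (Real.sin a.1))

/-- The polar angle `θ ∈ [0, π]` of a point of `S²`. -/
def thetaOf (Ω : S2) : ℝ := Real.arccos ((Ω : EuclideanSpace ℝ (Fin 3)) 2)

/-- The azimuthal angle `φ ∈ (−π, π]` of a point of `S²`. -/
def phiOf (Ω : S2) : ℝ :=
  Complex.arg (((Ω : EuclideanSpace ℝ (Fin 3)) 0 : ℂ) +
    ((Ω : EuclideanSpace ℝ (Fin 3)) 1 : ℂ) * Complex.I)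

/-- The coherent spin state `|Ω⟩₁ = cos(θ/2) e₁ + e^{iφ} sin(θ/2) e₂ ∈ ℂ²`. -/
def cs1 (Ω : S2) : Fin 2 → ℂ :=
  ![(Real.cos (thetaOf Ω / 2) : ℂ),
    Complex.exp (Complex.I * (phiOf Ω : ℂ)) * (Real.sin (thetaOf Ω / 2) : ℂ)]

/-- The `N`-fold coherent spin state `|Ω⟩_N = |Ω⟩₁^{⊗N} ∈ (ℂ²)^{⊗N}`. -/
def csN (N : ℕ) (Ω : S2) : EuclideanSpace ℂ (Fin N → Fin 2) :=
  WithLp.toLp 2 (fun i => ∏ k, cs1 Ω (i k))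

/-- The matrix of the weak integral `((N+1)/(4π)) ∫_{S²} f(Ω) |Ω⟩⟨Ω|_N dΩ` on `(ℂ²)^{⊗N}`
(entrywise Bochner integral, which in finite dimension coincides with the weak integral). -/
def Q'mat (N : ℕ) (f : S2 → ℂ) : TP N :=
  Matrix.of fun i j =>
    ((N + 1 : ℂ) / (4 * (Real.pi : ℂ))) * ∫ Ω, f Ω * csN N Ω i * conj (csN N Ω j) ∂μS2

/-- The coherent-state (Berezin) quantization map `Q'_{1/N}`, as an operator on
`Sym^N(ℂ²)` (the range of `|Ω⟩⟨Ω|_N` lies in `Sym^N(ℂ²)`, so the compression coincides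
with the operator defined by the weak integral). -/
def Q' (N : ℕ) (f : S2 → ℂ) : SymSub N →L[ℂ] SymSub N := restrSym N (Q'mat N f)

/-- The restriction of a polynomial (in three real variables) to the unit sphere `S²`. -/
def restrictS2 (p : MvPolynomial (Fin 3) ℂ) : S2 → ℂ :=
  fun Ω => MvPolynomial.eval (fun i => ((Ω : EuclideanSpace ℝ (Fin 3)) i : ℂ)) p

/-- The restriction to `S²` as a linear map. -/
def restrictS2Lin : MvPolynomial (Fin 3) ℂ →ₗ[ℂ] (S2 → ℂ) where
  toFun := restrictS2
  map_add' p q := by funext Ω; simp [restrictS2]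
  map_smul' c p := by funext Ω; simp [restrictS2]

/-- `P_N(S²)`: the space of restrictions to `S²` of complex polynomials of degree `≤ N`
in three real variables. -/
def PNS2 (N : ℕ) : Submodule ℂ (S2 → ℂ) where
  carrier := {g | ∃ p : MvPolynomial (Fin 3) ℂ, p.totalDegree ≤ N ∧ g = restrictS2 p}
  add_mem' := by
    rintro a b ⟨p, hp, rfl⟩ ⟨q, hq, rfl⟩
    exact ⟨p + q, le_trans (MvPolynomial.totalDegree_add p q) (by omega),
      by funext Ω; simp [restrictS2]⟩
  zero_mem' := ⟨0, by simp, by funext Ω; simp [restrictS2]⟩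
  smul_mem' := by
    rintro c a ⟨p, hp, rfl⟩
    exact ⟨c • p, le_trans (MvPolynomial.totalDegree_smul_le c p) hp,
      by funext Ω; simp [restrictS2]⟩

/-- The `N`-fold tensor power `U^{⊗N}` of a `2×2` matrix, on `(ℂ²)^{⊗N}`. -/
def tpow (N : ℕ) (U : Matrix (Fin 2) (Fin 2) ℂ) : TP N :=
  Matrix.of fun i j => ∏ k, U (i k) (j k)

/-- `σ_k(j) = I₂ ⊗ ⋯ ⊗ σ_k ⊗ ⋯ ⊗ I₂` with the Pauli matrix `σ_k` in the `j`-th slot. -/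
def pauliAt (N : ℕ) (k : Fin 3) (j : Fin N) : TP N :=
  Matrix.of fun a b =>
    pauli k (a j) (b j) *
      ∏ t ∈ Finset.univ.filter (fun t : Fin N => t ≠ j), (if a t = b t then (1 : ℂ) else 0)

/-- The quantum Curie–Weiss Hamiltonian
`h^{CW}_{1/N} = (1/N)( −(J/(2N)) Σ_{i,j} σ₃(i)σ₃(j) − B Σ_j σ₁(j))`. -/
def hCW (J B : ℝ) (N : ℕ) : TP N :=
  ((N : ℂ))⁻¹ • ((-(J / (2 * N)) : ℂ) • ∑ i : Fin N, ∑ j : Fin N,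
      pauliAt N 2 i * pauliAt N 2 j
    + (-(B : ℂ)) • ∑ j : Fin N, pauliAt N 0 j)

open scoped Classical in
/-- The action of a (special orthogonal) matrix on the unit sphere `S²`
(junk value if the image does not lie on the sphere). -/
def rotAct (R : Matrix (Fin 3) (Fin 3) ℝ) (Ω : S2) : S2 :=
  if h : (WithLp.toLp 2 (R.mulVec (Ω : EuclideanSpace ℝ (Fin 3))) : EuclideanSpace ℝ (Fin 3)) ∈
      Metric.sphere (0 : EuclideanSpace ℝ (Fin 3)) 1
  then ⟨WithLp.toLp 2 (R.mulVec (Ω : EuclideanSpace ℝ (Fin 3))), h⟩ else Ω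

/-- A polynomial in three variables is harmonic if its Laplacian vanishes. -/
def IsHarmonic (p : MvPolynomial (Fin 3) ℂ) : Prop :=
  ∑ i : Fin 3, MvPolynomial.pderiv i (MvPolynomial.pderiv i p) = 0

/-- The polynomial `x² + y² + z² − 1`. -/
def sphPoly : MvPolynomial (Fin 3) ℂ :=
  MvPolynomial.X 0 ^ 2 + MvPolynomial.X 1 ^ 2 + MvPolynomial.X 2 ^ 2 - 1

/-- The Dicke state `|k, N−k⟩ ∈ Sym^N(ℂ²)`: `binom(N,k)^{-1/2}` times the sum of all
elementary tensors with exactly `k` factors `e₂` (and `N−k` factors `e₁`). -/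
def dicke (N k : ℕ) : EuclideanSpace ℂ (Fin N → Fin 2) :=
  WithLp.toLp 2 (fun i => if (Finset.univ.filter fun t => i t = 1).card = k
    then ((Real.sqrt (N.choose k) : ℂ))⁻¹ else 0)

/-- The operator norm of a matrix acting on `(ℂ²)^{⊗N}` with its Euclidean (ℓ²) norm. -/
def matOpNorm {N : ℕ} (A : TP N) : ℝ :=
  ‖LinearMap.toContinuousLinearMap (Matrix.toEuclideanLin A)‖

/-! With `r² = x₁² + ⋯ + x_d²`, Euler's identity gives `Δ(r² q) = (4m + 2d) q + r² Δq` for `q`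
homogeneous of degree `m`. Iterating it shows that `q ↦ Δ(r² q)` is injective, hence bijective, on
the finite-dimensional space of homogeneous polynomials of degree `m`. So a homogeneous `p` of
degree `m + 2` is `h + r² q` with `Δ(r² q) = Δp`, i.e. `h` harmonic; recursing on `q` and writing
`r² q = (r² − 1) q + q` gives the decomposition. -/

namespace MvPolynomial

variable {σ R : Type*} [Fintype σ]

section CommRing

variable [CommRing R]

variable (σ R) in
def sumSqX : MvPolynomial σ R := ∑ i, X i ^ 2

def laplacian : MvPolynomial σ R →ₗ[R] MvPolynomial σ R :=
  ∑ i, (pderiv i).toLinearMap ∘ₗ (pderiv i).toLinearMap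

lemma laplacian_apply (p : MvPolynomial σ R) : laplacian p = ∑ i, pderiv i (pderiv i p) := by
  simp [laplacian]

lemma isHomogeneous_sumSqX : (sumSqX σ R).IsHomogeneous 2 :=
  IsHomogeneous.sum _ _ _ fun i _ => isHomogeneous_X_pow i 2

lemma IsHomogeneous.sumSqX_mul {q : MvPolynomial σ R} {m : ℕ} (hq : q.IsHomogeneous m) :
    (sumSqX σ R * q).IsHomogeneous (m + 2) := by
  rw [add_comm]
  exact isHomogeneous_sumSqX.mul hq

lemma pderiv_sumSqX (i : σ) : pderiv i (sumSqX σ R) = 2 * X i := by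
  classical
  simp [sumSqX, pderiv_X, Pi.single_apply]

lemma laplacian_sumSqX_mul (q : MvPolynomial σ R) :
    laplacian (sumSqX σ R * q) =
      (2 * Fintype.card σ : MvPolynomial σ R) * q + 4 * ∑ i, X i * pderiv i q +
        sumSqX σ R * laplacian q := by
  have h (i : σ) : pderiv i (pderiv i (sumSqX σ R * q)) =
      2 * q + 4 * (X i * pderiv i q) + sumSqX σ R * pderiv i (pderiv i q) := by
    have h2 : pderiv i (2 : MvPolynomial σ R) = 0 := by exact_mod_cast (pderiv i).map_natCast 2
    simp only [Derivation.leibniz, pderiv_sumSqX, smul_eq_mul, pderiv_X_self, map_add, h2]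
    ring
  simp only [laplacian_apply, h, Finset.sum_add_distrib, ← Finset.mul_sum, Finset.sum_const,
    Finset.card_univ, nsmul_eq_mul]
  ring

lemma IsHomogeneous.laplacian_sumSqX_mul {q : MvPolynomial σ R} {m : ℕ}
    (hq : q.IsHomogeneous m) :
    laplacian (sumSqX σ R * q) =
      (4 * m + 2 * Fintype.card σ) • q + sumSqX σ R * laplacian q := by
  rw [MvPolynomial.laplacian_sumSqX_mul, hq.sum_X_mul_pderiv, nsmul_eq_mul, nsmul_eq_mul]
  push_cast
  ring

protected lemma IsHomogeneous.laplacian {p : MvPolynomial σ R} {n : ℕ}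
    (hp : p.IsHomogeneous (n + 2)) :
    (laplacian p).IsHomogeneous n := by
  rw [laplacian_apply]
  exact IsHomogeneous.sum _ _ _ fun i _ => hp.pderiv.pderiv

lemma IsHomogeneous.laplacian_eq_zero_of_lt_two {p : MvPolynomial σ R} {n : ℕ}
    (hp : p.IsHomogeneous n) (hn : n < 2) : laplacian p = 0 := by
  have hconst (i : σ) : (pderiv i p).totalDegree = 0 :=
    Nat.le_zero.mp (hp.pderiv.totalDegree_le.trans (by omega))
  rw [laplacian_apply]
  exact Finset.sum_eq_zero fun i _ => by rw [totalDegree_eq_zero_iff_eq_C.mp (hconst i), pderiv_C]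

lemma IsHomogeneous.eq_zero_of_sumSqX_mul_laplacian_add_nsmul [IsDomain R] [CharZero R]
    {q : MvPolynomial σ R} {m c : ℕ} (hq : q.IsHomogeneous m) (hc : c ≠ 0)
    (h : sumSqX σ R * laplacian q + c • q = 0) : q = 0 := by
  induction m using Nat.strong_induction_on generalizing q c with
  | _ m ih =>
  suffices hΔ : laplacian q = 0 by simpa [hΔ, hc] using h
  rcases Nat.lt_or_ge m 2 with hm | hm
  · exact hq.laplacian_eq_zero_of_lt_two hm
  obtain ⟨k, rfl⟩ := Nat.exists_eq_add_of_le' hm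
  -- Applying `Δ` to the hypothesis gives the same relation for `Δ q` with a larger constant.
  have hΔ : sumSqX σ R * laplacian (laplacian q) +
      (c + (4 * k + 2 * Fintype.card σ)) • laplacian q = 0 := by
    have := congrArg laplacian h
    rw [map_add, map_nsmul, hq.laplacian.laplacian_sumSqX_mul, map_zero] at this
    rw [← this, add_nsmul]
    abel
  exact ih k (by omega) hq.laplacian (by omega) hΔ

end CommRing

section Field

variable {K : Type*} [Field K]

variable (σ K) in
def harmonicDegreeLE (n : ℕ) : Submodule K (MvPolynomial σ K) :=
  Submodule.span K {h | ∃ j ≤ n, h.IsHomogeneous j ∧ laplacian h = 0}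

lemma harmonicDegreeLE_mono : Monotone (harmonicDegreeLE σ K) :=
  fun _ _ hmn => Submodule.span_mono fun _ ⟨j, hj, hh⟩ => ⟨j, hj.trans hmn, hh⟩

variable [CharZero K] [Nonempty σ]

lemma IsHomogeneous.exists_laplacian_sumSqX_mul_eq {p : MvPolynomial σ K} {m : ℕ}
    (hp : p.IsHomogeneous m) :
    ∃ q : MvPolynomial σ K, q.IsHomogeneous m ∧ laplacian (sumSqX σ K * q) = p := by
  have hmaps : ∀ q ∈ homogeneousSubmodule σ K m,
      (laplacian ∘ₗ LinearMap.mulLeft K (sumSqX σ K)) q ∈ homogeneousSubmodule σ K m :=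
    fun q hq => (IsHomogeneous.sumSqX_mul hq).laplacian
  let f := (laplacian ∘ₗ LinearMap.mulLeft K (sumSqX σ K)).restrict hmaps
  have : Module.Finite K (homogeneousSubmodule σ K m) :=
    Module.Finite.iff_fg.mpr (homogeneousSubmodule_fg σ K m)
  have hf : Function.Injective f := by
    rw [← LinearMap.ker_eq_bot, LinearMap.ker_eq_bot']
    intro q hq
    have hq' : laplacian (sumSqX σ K * (q : MvPolynomial σ K)) = 0 := congrArg Subtype.val hq
    rw [IsHomogeneous.laplacian_sumSqX_mul q.2, add_comm] at hq'
    exact Subtype.ext (IsHomogeneous.eq_zero_of_sumSqX_mul_laplacian_add_nsmul q.2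
      (by have := Fintype.card_pos (α := σ); omega) hq')
  obtain ⟨q, hq⟩ := LinearMap.injective_iff_surjective.mp hf ⟨p, hp⟩
  exact ⟨q, q.2, congrArg Subtype.val hq⟩

lemma IsHomogeneous.exists_laplacian_eq_zero_add_sumSqX_mul {p : MvPolynomial σ K} {n : ℕ}
    (hp : p.IsHomogeneous (n + 2)) :
    ∃ h q : MvPolynomial σ K, h.IsHomogeneous (n + 2) ∧ laplacian h = 0 ∧
      q.IsHomogeneous n ∧ p = h + sumSqX σ K * q := by
  obtain ⟨q, hq, hΔ⟩ := hp.laplacian.exists_laplacian_sumSqX_mul_eq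
  exact ⟨p - sumSqX σ K * q, q, hp.sub hq.sumSqX_mul, by rw [map_sub, hΔ, sub_self], hq,
    by ring⟩

lemma IsHomogeneous.exists_mem_harmonicDegreeLE_add_mul_sumSqX_sub_one {p : MvPolynomial σ K}
    {n : ℕ} (hp : p.IsHomogeneous n) :
    ∃ h q : MvPolynomial σ K, h ∈ harmonicDegreeLE σ K n ∧ q.totalDegree ≤ n - 2 ∧
      p = h + q * (sumSqX σ K - 1) := by
  induction n using Nat.strong_induction_on generalizing p with
  | _ n ih =>
  rcases Nat.lt_or_ge n 2 with hn | hn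
  · exact ⟨p, 0, Submodule.subset_span ⟨n, le_rfl, hp, hp.laplacian_eq_zero_of_lt_two hn⟩,
      by simp, by ring⟩
  obtain ⟨k, rfl⟩ := Nat.exists_eq_add_of_le' hn
  obtain ⟨h₀, q₀, hh₀, hΔh₀, hq₀, rfl⟩ := hp.exists_laplacian_eq_zero_add_sumSqX_mul
  obtain ⟨h₁, q₁, hh₁, hq₁, hq₀_eq⟩ := ih k (by omega) hq₀
  refine ⟨h₀ + h₁, q₀ + q₁, ?_, ?_, by linear_combination hq₀_eq⟩
  · exact add_mem (Submodule.subset_span ⟨k + 2, le_rfl, hh₀, hΔh₀⟩)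
      (harmonicDegreeLE_mono (by omega) hh₁)
  · exact (totalDegree_add q₀ q₁).trans (max_le (hq₀.totalDegree_le.trans (by omega))
      (hq₁.trans (by omega)))

theorem exists_mem_harmonicDegreeLE_add_mul_sumSqX_sub_one {p : MvPolynomial σ K} {M : ℕ}
    (hp : p.totalDegree ≤ M) :
    ∃ h q : MvPolynomial σ K, h ∈ harmonicDegreeLE σ K M ∧ q.totalDegree ≤ M - 2 ∧
      p = h + q * (sumSqX σ K - 1) := by
  suffices hS : p ∈ harmonicDegreeLE σ K M ⊔
      (restrictTotalDegree σ K (M - 2)).map (LinearMap.mulRight K (sumSqX σ K - 1)) by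
    obtain ⟨h, hh, _, ⟨q, hq, rfl⟩, rfl⟩ := Submodule.mem_sup.mp hS
    exact ⟨h, q, hh, (mem_restrictTotalDegree _ _ _).mp hq, rfl⟩
  rw [← sum_homogeneousComponent p]
  refine Submodule.sum_mem _ fun i hi => ?_
  have hiM : i ≤ M := by rw [Finset.mem_range] at hi; omega
  obtain ⟨h, q, hh, hq, heq⟩ :=
    (homogeneousComponent_isHomogeneous i p).exists_mem_harmonicDegreeLE_add_mul_sumSqX_sub_one
  rw [heq]
  exact Submodule.add_mem_sup (harmonicDegreeLE_mono hiM hh)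
    ⟨q, (mem_restrictTotalDegree _ _ _).mpr (hq.trans (by omega)), rfl⟩

end Field

end MvPolynomial

lemma isHarmonic_iff_laplacian_eq_zero (p : MvPolynomial (Fin 3) ℂ) :
    IsHarmonic p ↔ MvPolynomial.laplacian p = 0 := by
  rw [MvPolynomial.laplacian_apply]
  rfl

lemma sphPoly_eq_sumSqX_sub_one : sphPoly = MvPolynomial.sumSqX (Fin 3) ℂ - 1 := by
  simp [sphPoly, MvPolynomial.sumSqX, Fin.sum_univ_three]

/-- Eq. (2.30) of the paper: every polynomial `p` of degree `≤ M` can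
be written `p = h + q (x²+y²+z²−1)` with `h` a finite linear combination of homogeneous
harmonic polynomials of degrees `≤ M` and `q` of degree `≤ M−2`. -/
theorem poly_decomp_harmonic_plus_multiple (M : ℕ) (p : MvPolynomial (Fin 3) ℂ)
    (hp : p.totalDegree ≤ M) :
    ∃ h q : MvPolynomial (Fin 3) ℂ,
      h ∈ Submodule.span ℂ
        {r : MvPolynomial (Fin 3) ℂ | ∃ j ≤ M, r.IsHomogeneous j ∧ IsHarmonic r} ∧
      q.totalDegree ≤ M - 2 ∧ p = h + q * sphPoly := by
  simpa only [sphPoly_eq_sumSqX_sub_one, isHarmonic_iff_laplacian_eq_zero,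
    MvPolynomial.harmonicDegreeLE] using
    MvPolynomial.exists_mem_harmonicDegreeLE_add_mul_sumSqX_sub_one hp
end
end

section
/- If a complex polynomial p of degree ≤ M in the three real variables x, y, z vanishes identically on the unit sphere S² ⊂ ℝ³, then p = q·(x²+y²+z²−1) for some polynomial q of degree ≤ M−2; i.e. the kernel of the restriction map from polynomials of degree ≤ M to functions on S² consists exactly of the multiples of x²+y²+z²−1 by polynomials of degree ≤ M−2. -/
open scoped ComplexConjugate
open MeasureTheory Filter Topology

noncomputable section

/-! Over `ℂ[y, z]` the polynomial `x² + y² + z² − 1` is monic of degree 2 in `x`, so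
`p = q (x² + y² + z² − 1) + r` with `r` of degree `< 2` in `x`. If `p` vanishes on `S²`, so
does `r`; over each real `(y, z)` with `y² + z² < 1` the polynomial `r(·, y, z)` then has the two
roots `±√(1 − y² − z²)`, hence is zero. So the coefficients of `r` vanish on a box with infinite
sides and `r = 0`. The degree bound holds because degrees add over a domain. -/

section SphereIdeal

open MvPolynomial

lemma sum_sq_coord_S2 (Ω : S2) :
    (Ω : EuclideanSpace ℝ (Fin 3)) 0 ^ 2 + (Ω : EuclideanSpace ℝ (Fin 3)) 1 ^ 2 +
      (Ω : EuclideanSpace ℝ (Fin 3)) 2 ^ 2 = 1 := by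
  have h := EuclideanSpace.norm_eq (Ω : EuclideanSpace ℝ (Fin 3))
  rw [norm_eq_of_mem_sphere Ω, eq_comm, Real.sqrt_eq_one] at h
  simpa [Fin.sum_univ_three] using h

lemma restrictS2_sphPoly (Ω : S2) : restrictS2 sphPoly Ω = 0 := by
  have h := congrArg (fun t : ℝ => (t : ℂ)) (sum_sq_coord_S2 Ω)
  push_cast at h
  simp [restrictS2, sphPoly, h]

lemma restrictS2_add (p q : MvPolynomial (Fin 3) ℂ) (Ω : S2) :
    restrictS2 (p + q) Ω = restrictS2 p Ω + restrictS2 q Ω :=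
  map_add _ p q

lemma restrictS2_mul (p q : MvPolynomial (Fin 3) ℂ) (Ω : S2) :
    restrictS2 (p * q) Ω = restrictS2 p Ω * restrictS2 q Ω :=
  map_mul _ p q

lemma exists_S2_coe_eq_cons (s : ℝ) (y : Fin 2 → ℝ) (h : s ^ 2 + y 0 ^ 2 + y 1 ^ 2 = 1) :
    ∃ Ω : S2, (Ω : EuclideanSpace ℝ (Fin 3)) = WithLp.toLp 2 (Fin.cons s y) := by
  refine ⟨⟨WithLp.toLp 2 (Fin.cons s y), ?_⟩, rfl⟩
  rw [mem_sphere_zero_iff_norm, EuclideanSpace.norm_eq, Real.sqrt_eq_one]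
  simpa [Fin.sum_univ_succ, ← add_assoc] using h

lemma finSuccEquiv_sphPoly :
    finSuccEquiv ℂ 2 sphPoly = Polynomial.X ^ 2 + Polynomial.C (X 0 ^ 2 + X 1 ^ 2 - 1) := by
  have h1 : (1 : Fin 3) = (0 : Fin 2).succ := rfl
  have h2 : (2 : Fin 3) = (1 : Fin 2).succ := rfl
  simp only [sphPoly, h1, h2, map_add, map_sub, map_pow, map_one, finSuccEquiv_X_zero,
    finSuccEquiv_X_succ]
  ring

lemma monic_finSuccEquiv_sphPoly : (finSuccEquiv ℂ 2 sphPoly).Monic := by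
  rw [finSuccEquiv_sphPoly]
  exact Polynomial.monic_X_pow_add_C _ two_ne_zero

lemma natDegree_finSuccEquiv_sphPoly : (finSuccEquiv ℂ 2 sphPoly).natDegree = 2 := by
  rw [finSuccEquiv_sphPoly]
  exact Polynomial.natDegree_X_pow_add_C

lemma two_le_totalDegree_sphPoly : 2 ≤ sphPoly.totalDegree := by
  rw [← natDegree_finSuccEquiv_sphPoly, natDegree_finSuccEquiv]
  exact degreeOf_le_totalDegree _ _

lemma exists_eq_mul_sphPoly_add (p : MvPolynomial (Fin 3) ℂ) :
    ∃ q r : MvPolynomial (Fin 3) ℂ,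
      p = q * sphPoly + r ∧ (finSuccEquiv ℂ 2 r).natDegree < 2 := by
  have hmonic := monic_finSuccEquiv_sphPoly
  have hne_one : finSuccEquiv ℂ 2 sphPoly ≠ 1 := fun h => by
    simpa [h] using natDegree_finSuccEquiv_sphPoly
  refine ⟨(finSuccEquiv ℂ 2).symm (finSuccEquiv ℂ 2 p /ₘ finSuccEquiv ℂ 2 sphPoly),
    (finSuccEquiv ℂ 2).symm (finSuccEquiv ℂ 2 p %ₘ finSuccEquiv ℂ 2 sphPoly),
    (finSuccEquiv ℂ 2).injective ?_, ?_⟩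
  · rw [map_add, map_mul, AlgEquiv.apply_symm_apply, AlgEquiv.apply_symm_apply, mul_comm]
    exact ((add_comm _ _).trans (Polynomial.modByMonic_add_div _ _)).symm
  · rw [AlgEquiv.apply_symm_apply]
    exact (Polynomial.natDegree_modByMonic_lt _ hmonic hne_one).trans_eq
      natDegree_finSuccEquiv_sphPoly

lemma map_finSuccEquiv_eq_zero_of_restrictS2_eq_zero {r : MvPolynomial (Fin 3) ℂ}
    (hdeg : (finSuccEquiv ℂ 2 r).natDegree < 2) (h : ∀ Ω : S2, restrictS2 r Ω = 0)
    (y : Fin 2 → ℝ) (hy : y 0 ^ 2 + y 1 ^ 2 < 1) :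
    (finSuccEquiv ℂ 2 r).map (eval fun i => (y i : ℂ)) = 0 := by
  have hroot : ∀ s : ℝ, s ^ 2 + y 0 ^ 2 + y 1 ^ 2 = 1 →
      ((finSuccEquiv ℂ 2 r).map (eval fun i => (y i : ℂ))).eval (s : ℂ) = 0 := by
    intro s hs
    obtain ⟨Ω, hΩ⟩ := exists_S2_coe_eq_cons s y hs
    rw [← eval_eq_eval_mv_eval', ← h Ω, restrictS2, hΩ]
    congr 2
    funext i
    exact Fin.cases rfl (fun _ => rfl) i
  set t := √(1 - y 0 ^ 2 - y 1 ^ 2)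
  have ht : t ^ 2 = 1 - y 0 ^ 2 - y 1 ^ 2 := Real.sq_sqrt (by linarith)
  have ht0 : (t : ℂ) ≠ 0 := by exact_mod_cast (Real.sqrt_pos.mpr (by linarith)).ne'
  refine Polynomial.eq_zero_of_natDegree_lt_card_of_eval_eq_zero' _ {(t : ℂ), -(t : ℂ)} ?_ ?_
  · simp only [Finset.mem_insert, Finset.mem_singleton]
    rintro _ (rfl | rfl)
    · exact hroot t (by linarith)
    · exact_mod_cast hroot (-t) (by linarith [neg_sq t])
  · rw [Finset.card_pair (by simpa [eq_neg_iff_add_eq_zero, ← two_mul] using ht0)]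
    exact Polynomial.natDegree_map_le.trans_lt hdeg

lemma eq_zero_of_restrictS2_eq_zero {r : MvPolynomial (Fin 3) ℂ}
    (hdeg : (finSuccEquiv ℂ 2 r).natDegree < 2) (h : ∀ Ω : S2, restrictS2 r Ω = 0) : r = 0 := by
  refine (finSuccEquiv ℂ 2).injective (Polynomial.ext fun k => ?_)
  rw [map_zero, Polynomial.coeff_zero]
  refine funext_set (fun _ => ((↑) : ℝ → ℂ) '' Set.Ioo (-1 / 2) (1 / 2))
    (fun _ => (Set.Ioo_infinite (by norm_num)).image Complex.ofReal_injective.injOn)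
    fun x hx => ?_
  choose y hy hyx using Set.mem_univ_pi.mp hx
  obtain rfl : (fun i => (y i : ℂ)) = x := funext hyx
  have hy0 := hy 0
  have hy1 := hy 1
  simp only [Set.mem_Ioo] at hy0 hy1
  simpa [Polynomial.coeff_map] using
    congrArg (Polynomial.coeff · k)
      (map_finSuccEquiv_eq_zero_of_restrictS2_eq_zero hdeg h y (by nlinarith))

lemma totalDegree_le_sub_two_of_mul_sphPoly {q : MvPolynomial (Fin 3) ℂ} {M : ℕ}
    (h : (q * sphPoly).totalDegree ≤ M) : q.totalDegree ≤ M - 2 := by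
  have h2 := two_le_totalDegree_sphPoly
  rcases eq_or_ne q 0 with rfl | hq
  · simp
  · have hs : sphPoly ≠ 0 := fun h0 => by simp [h0] at h2
    rw [totalDegree_mul_of_isDomain hq hs] at h
    omega

end SphereIdeal

/-- a polynomial `p` of degree `≤ M` vanishes identically on `S²` if
and only if `p = q (x²+y²+z²−1)` for some polynomial `q` of degree `≤ M−2`. -/
theorem vanishes_on_sphere_iff_multiple (M : ℕ) (p : MvPolynomial (Fin 3) ℂ)
    (hp : p.totalDegree ≤ M) :
    (∀ Ω : S2, restrictS2 p Ω = 0) ↔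
      ∃ q : MvPolynomial (Fin 3) ℂ, q.totalDegree ≤ M - 2 ∧ p = q * sphPoly := by
  refine ⟨fun h => ?_, ?_⟩
  · obtain ⟨q, r, rfl, hr⟩ := exists_eq_mul_sphPoly_add p
    obtain rfl : r = 0 := eq_zero_of_restrictS2_eq_zero hr fun Ω => by
      simpa [restrictS2_add, restrictS2_mul, restrictS2_sphPoly] using h Ω
    rw [add_zero] at hp ⊢
    exact ⟨q, totalDegree_le_sub_two_of_mul_sphPoly hp, rfl⟩
  · rintro ⟨q, -, rfl⟩ Ω
    rw [restrictS2_mul, restrictS2_sphPoly, mul_zero]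

end
end
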